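/- arXiv:2103.12427 — 5 statements merged into one kernel-verified Lean document; each statement's English description precedes it below -/
import Mathlib

section
/- Let p be a prime. Let 𝒞 be a collection of balls in ℚ_p satisfying: (1) 𝒞 is nonempty; (2) 𝒞 is linearly ordered by inclusion; (3) 𝒞 is upwards closed, i.e., if B and B′ are balls with B ⊇ B′ and B′ ∈ 𝒞, then B ∈ 𝒞; (4) 𝒞 has no minimal element with respect to inclusion. Then there exists d ∈ ℚ_p such that 𝒞 is exactly the collection of all balls containing d. -/
/-- A ball in `ℚ_p`: the set `{x | v(x - a) ≥ γ}`, equivalently `{x | ‖x - a‖ ≤ p^(-γ)}`. -/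
def IsBall (p : ℕ) [Fact p.Prime] (B : Set ℚ_[p]) : Prop :=
  ∃ (a : ℚ_[p]) (γ : ℤ), B = {x : ℚ_[p] | ‖x - a‖ ≤ (p : ℝ) ^ (-γ)}

section aux

variable (p : ℕ) [Fact p.Prime]

lemma pos_rad (γ : ℤ) : (0 : ℝ) < (p : ℝ) ^ (-γ) :=
  zpow_pos (by exact_mod_cast (Fact.out : p.Prime).pos) _

lemma ball_eq_closedBall (a : ℚ_[p]) (γ : ℤ) :
    {x : ℚ_[p] | ‖x - a‖ ≤ (p : ℝ) ^ (-γ)} = Metric.closedBall a ((p : ℝ) ^ (-γ)) := by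
  ext x; simp [Metric.mem_closedBall, dist_eq_norm]

lemma one_lt_p : (1 : ℝ) < (p : ℝ) := by
  exact_mod_cast (Fact.out : p.Prime).one_lt

lemma rad_mono {γ γ' : ℤ} (h : γ ≤ γ') : (p : ℝ) ^ (-γ') ≤ (p : ℝ) ^ (-γ) :=
  zpow_le_zpow_right₀ (le_of_lt (one_lt_p p)) (neg_le_neg h)

lemma ball_subset {a a' d : ℚ_[p]} {γ γ' : ℤ} (h : γ ≤ γ')
    (hd : ‖d - a‖ ≤ (p : ℝ) ^ (-γ)) (hd' : ‖d - a'‖ ≤ (p : ℝ) ^ (-γ')) :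
    {x : ℚ_[p] | ‖x - a'‖ ≤ (p : ℝ) ^ (-γ')} ⊆ {x : ℚ_[p] | ‖x - a‖ ≤ (p : ℝ) ^ (-γ)} := by
  intro x hx
  simp only [Set.mem_setOf_eq] at hx ⊢
  have h1 : ‖x - d‖ ≤ (p : ℝ) ^ (-γ) := by
    have : x - d = (x - a') + (a' - d) := by ring
    rw [this]
    refine le_trans (Padic.nonarchimedean _ _) (max_le (le_trans hx (rad_mono p h)) ?_)
    rw [show a' - d = -(d - a') by ring, norm_neg]
    exact le_trans hd' (rad_mono p h)
  have : x - a = (x - d) + (d - a) := by ring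
  rw [this]
  exact le_trans (Padic.nonarchimedean _ _) (max_le h1 hd)

lemma ssubset_exp {a a' : ℚ_[p]} {γ γ' : ℤ}
    (h : {x : ℚ_[p] | ‖x - a'‖ ≤ (p : ℝ) ^ (-γ')} ⊂ {x : ℚ_[p] | ‖x - a‖ ≤ (p : ℝ) ^ (-γ)}) :
    γ < γ' := by
  by_contra hle
  push_neg at hle
  have ha' : a' ∈ {x : ℚ_[p] | ‖x - a'‖ ≤ (p : ℝ) ^ (-γ')} := by
    simp only [Set.mem_setOf_eq, sub_self, norm_zero]
    exact le_of_lt (pos_rad p γ')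
  have ha'2 := h.1 ha'
  simp only [Set.mem_setOf_eq] at ha' ha'2
  exact h.2 (ball_subset p hle ha' ha'2)

end aux

theorem chains (p : ℕ) [Fact p.Prime] (C : Set (Set ℚ_[p]))
    (hball : ∀ B ∈ C, IsBall p B)
    (hne : C.Nonempty)
    (hchain : ∀ B ∈ C, ∀ B' ∈ C, B ⊆ B' ∨ B' ⊆ B)
    (hup : ∀ B B' : Set ℚ_[p], IsBall p B → B' ∈ C → B' ⊆ B → B ∈ C)
    (hnomin : ∀ B ∈ C, ∃ B' ∈ C, B' ⊂ B) :
    ∃ d : ℚ_[p], C = {B : Set ℚ_[p] | IsBall p B ∧ d ∈ B} := by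
  -- the intersection of C is nonempty
  have hSne : Nonempty C := hne.to_subtype
  have hdir : DirectedOn (· ⊇ ·) C := fun B hB B' hB' => by
    rcases hchain B hB B' hB' with h | h
    · exact ⟨B, hB, subset_refl _, h⟩
    · exact ⟨B', hB', h, subset_refl _⟩
  have hd : (⋂₀ C).Nonempty := by
    refine IsCompact.nonempty_sInter_of_directed_nonempty_isCompact_isClosed hdir ?_ ?_ ?_
    · rintro B hB
      obtain ⟨a, γ, rfl⟩ := hball B hB
      refine ⟨a, ?_⟩
      simp only [Set.mem_setOf_eq, sub_self, norm_zero]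
      exact le_of_lt (pos_rad p γ)
    · rintro B hB
      obtain ⟨a, γ, rfl⟩ := hball B hB
      rw [ball_eq_closedBall]
      exact isCompact_closedBall a _
    · rintro B hB
      obtain ⟨a, γ, rfl⟩ := hball B hB
      rw [ball_eq_closedBall]
      exact Metric.isClosed_closedBall
  obtain ⟨d, hd⟩ := hd
  refine ⟨d, ?_⟩
  -- key: for every γ there is a ball in C of exponent ≥ γ
  obtain ⟨B0, hB0⟩ := hne
  obtain ⟨a0, γ0, hB0eq⟩ := hball B0 hB0
  have key : ∀ n : ℕ, ∃ B ∈ C, ∃ a γ,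
      B = {x : ℚ_[p] | ‖x - a‖ ≤ (p : ℝ) ^ (-γ)} ∧ γ0 + n ≤ γ := by
    intro n
    induction n with
    | zero => exact ⟨B0, hB0, a0, γ0, hB0eq, by simp⟩
    | succ n ih =>
      obtain ⟨B, hB, a, γ, rfl, hγ⟩ := ih
      obtain ⟨B', hB', hss⟩ := hnomin _ hB
      obtain ⟨a', γ', rfl⟩ := hball B' hB'
      refine ⟨_, hB', a', γ', rfl, ?_⟩
      have := ssubset_exp p hss
      push_cast
      omega
  ext B
  constructor
  · intro hB
    exact ⟨hball B hB, hd B hB⟩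
  · rintro ⟨⟨a, γ, rfl⟩, hdB⟩
    obtain ⟨B', hB', a', γ', rfl, hγ'⟩ := key (γ - γ0).toNat
    have hγle : γ ≤ γ' := by omega
    have hd' : ‖d - a'‖ ≤ (p : ℝ) ^ (-γ') := hd _ hB'
    exact hup _ _ ⟨a, γ, rfl⟩ hB' (ball_subset p hγle hdB hd')
end

section
/- Let p be a prime, n ≥ 1, and let Y ⊆ ℚ_p^n be a definable set. Then Y is closed and bounded in ℚ_p^n (equivalently, compact) if and only if the following holds: for every m ≥ 1, every nonempty definable set T ⊆ ℚ_p^m, and every definable set F ⊆ ℚ_p^m × ℚ_p^n such that for each t ∈ T the fiber Y_t = {y ∈ ℚ_p^n : (t,y) ∈ F} is a nonempty subset of Y closed in Y, and such that the family {Y_t : t ∈ T} is downward directed (for all t, t′ ∈ T there is t″ ∈ T with Y_{t″} ⊆ Y_t ∩ Y_{t′}), the intersection ⋂_{t∈T} Y_t is nonempty. -/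
/-!
Closed bounded subsets of `ℚ_p^n` are compact, and in a compact set every directed family of
nonempty closed subsets has nonempty intersection. Conversely, let `Y` be definably compact.
Intersecting `Y` with the balls of radius `‖t‖` (`t ≠ 0`) around a point of `closure Y` gives a
definable directed family whose intersection can only contain that point, so `Y` is closed;
intersecting it with the complements of the balls of radius `‖t‖` around `0` shows that `Y` is
bounded. These families are definable because the valuation ring is existentially definable:
`‖z‖ ≤ 1` iff `1 + p³z⁴` is a square (Hensel's lemma; for `‖z‖ > 1` its valuation is odd).
-/

open FirstOrder

/-- A set `s ⊆ ℚ_p^α` is definable if it is definable with parameters from `ℚ_p`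
in the first-order language of rings. -/
def pDefinable (p : ℕ) [Fact p.Prime] {α : Type} (s : Set (α → ℚ_[p])) : Prop :=
  letI := Ring.compatibleRingOfRing ℚ_[p]
  Set.Definable (Set.univ : Set ℚ_[p]) Language.ring s

/-- The fiber `Y_t = {y ∈ ℚ_p^n | (t, y) ∈ F}` of a definable family
`F ⊆ ℚ_p^m × ℚ_p^n` over `t ∈ ℚ_p^m`. -/
def famFiber (p : ℕ) [Fact p.Prime] {m n : ℕ}
    (F : Set (Fin m ⊕ Fin n → ℚ_[p])) (t : Fin m → ℚ_[p]) :
    Set (Fin n → ℚ_[p]) :=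
  {y | Sum.elim t y ∈ F}

open MvPolynomial

section

variable {p : ℕ} [Fact p.Prime]

theorem PadicInt.exists_sq_eq_one_add_p_pow_three_mul_pow_four (z : ℤ_[p]) :
    ∃ w : ℤ_[p], w ^ 2 = 1 + (p : ℤ_[p]) ^ 3 * z ^ 4 := by
  set c : ℤ_[p] := 1 + (p : ℤ_[p]) ^ 3 * z ^ 4
  have hsub : ‖(1 : ℤ_[p]) - c‖ ≤ (p : ℝ) ^ (-(3 : ℕ) : ℤ) := by
    rw [PadicInt.norm_le_pow_iff_mem_span_pow]
    simpa [c] using Ideal.mul_mem_right (z ^ 4) _ (Ideal.mem_span_singleton_self _)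
  have hfour : (p : ℝ) ^ (-(3 : ℕ) : ℤ) < ‖(4 : ℤ_[p])‖ := by
    refine lt_of_not_ge fun h => ?_
    have hdvd := Int.le_of_dvd (by norm_num)
      ((PadicInt.norm_int_le_pow_iff_dvd (k := 4) (n := 3)).mp (by exact_mod_cast h))
    have h8 : (2 : ℤ) ^ 3 ≤ (p : ℤ) ^ 3 :=
      pow_le_pow_left₀ (by norm_num) (by exact_mod_cast (Fact.out : p.Prime).two_le) 3
    omega
  -- Hensel at `1` for `X² - c`: `‖1 - c‖ ≤ p⁻³ < ‖4‖ = ‖2‖²`.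
  obtain ⟨w, hw, -⟩ := hensels_lemma (F := Polynomial.X ^ 2 - Polynomial.C c) (a := 1) (by
    simp only [Polynomial.aeval_X_pow, Polynomial.aeval_sub, Polynomial.aeval_C,
      Polynomial.derivative_sub, Polynomial.derivative_X_pow, Polynomial.derivative_C,
      one_pow]
    calc ‖(1 : ℤ_[p]) - c‖ ≤ (p : ℝ) ^ (-(3 : ℕ) : ℤ) := hsub
      _ < ‖(4 : ℤ_[p])‖ := hfour
      _ = _ := by norm_num [← norm_pow])
  exact ⟨w, by simpa [sub_eq_zero] using hw⟩

namespace Padic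

theorem norm_le_one_of_sq_eq_one_add_p_pow_three_mul_pow_four {z w : ℚ_[p]}
    (h : w ^ 2 = 1 + (p : ℚ_[p]) ^ 3 * z ^ 4) : ‖z‖ ≤ 1 := by
  have hp : (1 : ℝ) < p := by exact_mod_cast (Fact.out : p.Prime).one_lt
  have hp0 : (p : ℚ_[p]) ^ 3 ≠ 0 := pow_ne_zero _ (by exact_mod_cast (Fact.out : p.Prime).ne_zero)
  by_contra! hz
  have hz0 : z ^ 4 ≠ 0 := pow_ne_zero _ (norm_pos_iff.mp (one_pos.trans hz))
  set a := (p : ℚ_[p]) ^ 3 * z ^ 4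
  have ha0 : a ≠ 0 := mul_ne_zero hp0 hz0
  have hva : a.valuation = 3 + 4 * z.valuation := by
    rw [valuation_mul hp0 hz0, valuation_pow, valuation_pow, valuation_p]
    push_cast; ring
  have hvz : z.valuation < 0 := by simpa [norm_le_one_iff_val_nonneg] using hz.not_ge
  have h1a : ‖(1 : ℚ_[p])‖ < ‖a‖ := by
    rw [norm_one, norm_eq_zpow_neg_valuation ha0]
    exact one_lt_zpow₀ hp (by omega)
  have hw0 : w ^ 2 ≠ 0 := by
    intro h0
    rw [h0, eq_comm, add_eq_zero_iff_eq_neg'] at h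
    simp [h] at h1a
  have hnorm : ‖w ^ 2‖ = ‖a‖ := by rw [h, add_eq_max_of_ne h1a.ne, max_eq_right h1a.le]
  rw [norm_eq_zpow_neg_valuation hw0, norm_eq_zpow_neg_valuation ha0,
    zpow_right_inj₀ (by linarith) hp.ne', valuation_pow, hva] at hnorm
  omega

theorem norm_le_one_iff_exists_sq_eq (z : ℚ_[p]) :
    ‖z‖ ≤ 1 ↔ ∃ w : ℚ_[p], w ^ 2 = 1 + (p : ℚ_[p]) ^ 3 * z ^ 4 :=
  ⟨fun hz => by
    obtain ⟨w, hw⟩ := PadicInt.exists_sq_eq_one_add_p_pow_three_mul_pow_four (⟨z, hz⟩ : ℤ_[p])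
    exact ⟨w, by exact_mod_cast congrArg ((↑) : ℤ_[p] → ℚ_[p]) hw⟩,
    fun ⟨_, hw⟩ => norm_le_one_of_sq_eq_one_add_p_pow_three_mul_pow_four hw⟩

end Padic

namespace pDefinable

variable {α β : Type}

theorem compl {s : Set (α → ℚ_[p])} (hs : pDefinable p s) : pDefinable p sᶜ :=
  letI := Ring.compatibleRingOfRing ℚ_[p]
  Set.Definable.compl hs

theorem inter {s t : Set (α → ℚ_[p])} (hs : pDefinable p s) (ht : pDefinable p t) :
    pDefinable p (s ∩ t) :=
  letI := Ring.compatibleRingOfRing ℚ_[p]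
  Set.Definable.inter hs ht

theorem iInter {ι : Type} [Finite ι] {s : ι → Set (α → ℚ_[p])} (hs : ∀ i, pDefinable p (s i)) :
    pDefinable p (⋂ i, s i) :=
  letI := Ring.compatibleRingOfRing ℚ_[p]
  Set.definable_iInter_of_finite hs

theorem preimage_comp (g : α → β) {s : Set (α → ℚ_[p])} (hs : pDefinable p s) :
    pDefinable p ((fun v : β → ℚ_[p] => v ∘ g) ⁻¹' s) :=
  letI := Ring.compatibleRingOfRing ℚ_[p]
  Set.Definable.preimage_comp g hs

theorem exists_of_finite [Finite β] {s : Set (α ⊕ β → ℚ_[p])} (hs : pDefinable p s) :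
    pDefinable p {v | ∃ u : β → ℚ_[p], Sum.elim v u ∈ s} :=
  letI := Ring.compatibleRingOfRing ℚ_[p]
  Set.Definable.exists_of_finite hs

end pDefinable

theorem pDefinable_eval_eq_zero {α : Type} (f : MvPolynomial α ℚ_[p]) :
    pDefinable p {v | eval v f = 0} := by
  let _ := Ring.compatibleRingOfRing ℚ_[p]
  have := (Ring.mvPolynomial_zeroLocus_definable {f}).mono (Set.subset_univ _)
  simpa [pDefinable, zeroLocus_span] using this

theorem pDefinable_norm_eval_le_one {α : Type} (f : MvPolynomial α ℚ_[p]) :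
    pDefinable p {v | ‖eval v f‖ ≤ 1} := by
  have := (pDefinable_eval_eq_zero (X (Sum.inr 0) ^ 2 - (1 + C ((p : ℚ_[p]) ^ 3) *
    rename Sum.inl f ^ 4) : MvPolynomial (α ⊕ Fin 1) ℚ_[p])).exists_of_finite
  convert this using 1
  ext v
  simp [eval_rename, sub_eq_zero, Padic.norm_le_one_iff_exists_sq_eq, Fin.exists_fin_succ_pi]

theorem norm_le_norm_iff_exists_norm_le_one_mul {K : Type*} [NormedDivisionRing K] (a b : K) :
    ‖a‖ ≤ ‖b‖ ↔ ∃ z : K, ‖z‖ ≤ 1 ∧ a = b * z := by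
  refine ⟨fun h => ?_, fun ⟨z, hz, hab⟩ => ?_⟩
  · rcases eq_or_ne b 0 with rfl | hb
    · exact ⟨0, by simp, by simpa using h⟩
    · refine ⟨b⁻¹ * a, ?_, by rw [mul_inv_cancel_left₀ hb]⟩
      rw [norm_mul, norm_inv]
      exact inv_mul_le_one_of_le₀ h (norm_nonneg b)
  · rw [hab, norm_mul]
    exact mul_le_of_le_one_right (norm_nonneg b) hz

theorem pDefinable_norm_eval_le_norm_eval {α : Type} (f g : MvPolynomial α ℚ_[p]) :
    pDefinable p {v | ‖eval v f‖ ≤ ‖eval v g‖} := by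
  have := ((pDefinable_norm_eval_le_one (X (Sum.inr 0))).inter (pDefinable_eval_eq_zero
    (rename Sum.inl f - rename Sum.inl g * X (Sum.inr 0) : MvPolynomial (α ⊕ Fin 1) ℚ_[p]))
    ).exists_of_finite
  convert this using 1
  ext v
  simp [eval_rename, sub_eq_zero, norm_le_norm_iff_exists_norm_le_one_mul, Fin.exists_fin_succ_pi]

theorem pDefinable_setOf_mem_closedBall {n : ℕ} (c : Fin n → ℚ_[p]) :
    pDefinable p {v : Fin 1 ⊕ Fin n → ℚ_[p] |
      v ∘ Sum.inr ∈ Metric.closedBall c ‖v (Sum.inl 0)‖} := by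
  have := pDefinable.iInter fun i => pDefinable_norm_eval_le_norm_eval
    (X (Sum.inr i) - C (c i)) (X (Sum.inl 0) : MvPolynomial (Fin 1 ⊕ Fin n) ℚ_[p])
  convert this using 1
  ext v
  simp [Metric.mem_closedBall, dist_eq_norm, pi_norm_le_iff_of_nonneg]

theorem IsCompact.nonempty_biInter_of_directed {X ι : Type*} [TopologicalSpace X] {Y : Set X}
    (hY : IsCompact Y) {T : Set ι} (hT : T.Nonempty) {G : ι → Set X}
    (hG : ∀ t ∈ T, (G t).Nonempty ∧ G t ⊆ Y ∧ IsClosed (Subtype.val ⁻¹' G t : Set Y))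
    (hdir : ∀ t ∈ T, ∀ t' ∈ T, ∃ t'' ∈ T, G t'' ⊆ G t ∩ G t') :
    (⋂ t ∈ T, G t).Nonempty := by
  have := isCompact_iff_compactSpace.mp hY
  have := hT.to_subtype
  obtain ⟨y, hy⟩ := IsCompact.nonempty_iInter_of_directed_nonempty_isCompact_isClosed
    (fun t : T => (Subtype.val ⁻¹' G t : Set Y))
    (fun t t' => by
      obtain ⟨t'', ht'', hsub⟩ := hdir t t.2 t' t'.2
      exact ⟨⟨t'', ht''⟩, Set.preimage_mono fun _ h => (hsub h).1,
        Set.preimage_mono fun _ h => (hsub h).2⟩)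
    (fun t => by
      obtain ⟨x, hx⟩ := (hG t t.2).1
      exact ⟨⟨x, (hG t t.2).2.1 hx⟩, hx⟩)
    (fun t => (hG t t.2).2.2.isCompact) (fun t => (hG t t.2).2.2)
  exact ⟨y, Set.mem_iInter₂.mpr fun t ht => Set.mem_iInter.mp hy ⟨t, ht⟩⟩

def IsDefinablyCompact (p : ℕ) [Fact p.Prime] {n : ℕ} (Y : Set (Fin n → ℚ_[p])) : Prop :=
  ∀ m : ℕ, 1 ≤ m →
    ∀ T : Set (Fin m → ℚ_[p]), T.Nonempty → pDefinable p T →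
    ∀ F : Set (Fin m ⊕ Fin n → ℚ_[p]), pDefinable p F →
    (∀ t ∈ T, (famFiber p F t).Nonempty ∧ famFiber p F t ⊆ Y ∧
      IsClosed (Subtype.val ⁻¹' famFiber p F t : Set Y)) →
    (∀ t ∈ T, ∀ t' ∈ T, ∃ t'' ∈ T,
      famFiber p F t'' ⊆ famFiber p F t ∩ famFiber p F t') →
    (⋂ t ∈ T, famFiber p F t).Nonempty

variable {n : ℕ} {Y : Set (Fin n → ℚ_[p])}

theorem IsCompact.isDefinablyCompact (hY : IsCompact Y) : IsDefinablyCompact p Y :=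
  fun _ _ _ hT _ _ _ hfib hdir => hY.nonempty_biInter_of_directed hT hfib hdir

theorem famFiber_preimage_comp_inr_inter {m : ℕ} (S : Set (Fin m ⊕ Fin n → ℚ_[p]))
    (t : Fin m → ℚ_[p]) :
    famFiber p ((fun v => v ∘ Sum.inr) ⁻¹' Y ∩ S) t = Y ∩ famFiber p S t :=
  rfl

theorem famFiber_compl {m : ℕ} (S : Set (Fin m ⊕ Fin n → ℚ_[p])) (t : Fin m → ℚ_[p]) :
    famFiber p Sᶜ t = (famFiber p S t)ᶜ :=
  rfl

theorem famFiber_setOf_mem_closedBall (c : Fin n → ℚ_[p]) (t : Fin 1 → ℚ_[p]) :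
    famFiber p {v | v ∘ Sum.inr ∈ Metric.closedBall c ‖v (Sum.inl 0)‖} t =
      Metric.closedBall c ‖t 0‖ :=
  rfl

theorem IsDefinablyCompact.exists_mem_forall_mem_famFiber (hY : IsDefinablyCompact p Y)
    (hYdef : pDefinable p Y) {S : Set (Fin 1 ⊕ Fin n → ℚ_[p])} (hS : pDefinable p S)
    (hne : ∀ t : Fin 1 → ℚ_[p], t 0 ≠ 0 → (Y ∩ famFiber p S t).Nonempty)
    (hclosed : ∀ t : Fin 1 → ℚ_[p], t 0 ≠ 0 → IsClosed (famFiber p S t))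
    (hchain : ∀ s t, famFiber p S s ⊆ famFiber p S t ∨ famFiber p S t ⊆ famFiber p S s) :
    ∃ y ∈ Y, ∀ t : Fin 1 → ℚ_[p], t 0 ≠ 0 → y ∈ famFiber p S t := by
  have hT : pDefinable p {t : Fin 1 → ℚ_[p] | t 0 ≠ 0} := by
    simpa [Set.compl_ofPred] using
      (pDefinable_eval_eq_zero (X 0 : MvPolynomial (Fin 1) ℚ_[p])).compl
  obtain ⟨y, hy⟩ := hY 1 le_rfl {t | t 0 ≠ 0} ⟨1, one_ne_zero⟩ hT _
    ((hYdef.preimage_comp Sum.inr).inter hS)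
    (fun t ht => ⟨hne t ht, Set.inter_subset_left, by
      rw [famFiber_preimage_comp_inr_inter, Subtype.preimage_coe_self_inter]
      exact (hclosed t ht).preimage continuous_subtype_val⟩)
    (fun t ht t' ht' => (hchain t t').elim
      (fun h => ⟨t, ht, Set.subset_inter subset_rfl (Set.inter_subset_inter_right Y h)⟩)
      (fun h => ⟨t', ht', Set.subset_inter (Set.inter_subset_inter_right Y h) subset_rfl⟩))
  simp only [Set.mem_iInter] at hy
  exact ⟨y, (hy 1 one_ne_zero).1, fun t ht => (hy t ht).2⟩

theorem IsDefinablyCompact.isClosed (hY : IsDefinablyCompact p Y) (hYdef : pDefinable p Y) :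
    IsClosed Y := by
  refine closure_subset_iff_isClosed.mp fun x hx => ?_
  obtain ⟨y, hyY, hy⟩ := hY.exists_mem_forall_mem_famFiber hYdef
    (pDefinable_setOf_mem_closedBall x)
    (fun t ht => by
      obtain ⟨y, hyY, hxy⟩ := Metric.mem_closure_iff.mp hx ‖t 0‖ (norm_pos_iff.mpr ht)
      exact ⟨y, hyY, Metric.mem_closedBall'.mpr hxy.le⟩)
    (fun t _ => by
      rw [famFiber_setOf_mem_closedBall]
      exact Metric.isClosed_closedBall)
    (fun s t => by
      simp only [famFiber_setOf_mem_closedBall]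
      exact (le_total ‖s 0‖ ‖t 0‖).imp Metric.closedBall_subset_closedBall
        Metric.closedBall_subset_closedBall)
  obtain rfl : y = x := eq_of_forall_dist_le fun ε hε => by
    obtain ⟨a, ha, haε⟩ := NormedField.exists_norm_lt ℚ_[p] hε
    exact (hy (fun _ => a) (norm_pos_iff.mp ha)).trans haε.le
  exact hyY

theorem IsDefinablyCompact.isBounded (hY : IsDefinablyCompact p Y) (hYdef : pDefinable p Y) :
    Bornology.IsBounded Y := by
  by_contra hunbdd
  obtain ⟨y, hyY, hy⟩ := hY.exists_mem_forall_mem_famFiber hYdef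
    (pDefinable_setOf_mem_closedBall 0).compl
    (fun t _ => by
      rw [famFiber_compl, famFiber_setOf_mem_closedBall]
      exact Set.inter_compl_nonempty_iff.mpr fun h => hunbdd (Metric.isBounded_closedBall.subset h))
    (fun t ht => by
      rw [famFiber_compl, famFiber_setOf_mem_closedBall]
      exact (IsUltrametricDist.isOpen_closedBall 0 (norm_ne_zero_iff.mpr ht)).isClosed_compl)
    (fun s t => by
      simp only [famFiber_compl, famFiber_setOf_mem_closedBall, Set.compl_subset_compl]
      exact (le_total ‖s 0‖ ‖t 0‖).symm.imp Metric.closedBall_subset_closedBall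
        Metric.closedBall_subset_closedBall)
  obtain ⟨a, ha⟩ := NormedField.exists_lt_norm ℚ_[p] ‖y‖
  have hya := hy (fun _ => a) (norm_pos_iff.mp ((norm_nonneg y).trans_lt ha))
  rw [famFiber_compl, famFiber_setOf_mem_closedBall, Set.mem_compl_iff, mem_closedBall_zero_iff,
    not_le] at hya
  exact (ha.trans hya).false

end

theorem k_cb_and_cb_k_general (p : ℕ) [Fact p.Prime] (n : ℕ)
    (Y : Set (Fin n → ℚ_[p])) (hYdef : pDefinable p Y) :
    (IsClosed Y ∧ Bornology.IsBounded Y) ↔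
      (∀ m : ℕ, 1 ≤ m →
        ∀ T : Set (Fin m → ℚ_[p]), T.Nonempty → pDefinable p T →
        ∀ F : Set (Fin m ⊕ Fin n → ℚ_[p]), pDefinable p F →
        (∀ t ∈ T, (famFiber p F t).Nonempty ∧ famFiber p F t ⊆ Y ∧
          IsClosed (Subtype.val ⁻¹' famFiber p F t : Set Y)) →
        (∀ t ∈ T, ∀ t' ∈ T, ∃ t'' ∈ T,
          famFiber p F t'' ⊆ famFiber p F t ∩ famFiber p F t') →
        (⋂ t ∈ T, famFiber p F t).Nonempty) :=
  ⟨fun ⟨hclosed, hbdd⟩ => (Metric.isCompact_of_isClosed_isBounded hclosed hbdd).isDefinablyCompact,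
    fun h => ⟨IsDefinablyCompact.isClosed h hYdef, IsDefinablyCompact.isBounded h hYdef⟩⟩

theorem k_cb_and_cb_k (p : ℕ) [Fact p.Prime] (n : ℕ) (hn : 1 ≤ n)
    (Y : Set (Fin n → ℚ_[p])) (hYdef : pDefinable p Y) :
    (IsClosed Y ∧ Bornology.IsBounded Y) ↔
      (∀ m : ℕ, 1 ≤ m →
        ∀ T : Set (Fin m → ℚ_[p]), T.Nonempty → pDefinable p T →
        ∀ F : Set (Fin m ⊕ Fin n → ℚ_[p]), pDefinable p F →
        (∀ t ∈ T, (famFiber p F t).Nonempty ∧ famFiber p F t ⊆ Y ∧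
          IsClosed (Subtype.val ⁻¹' famFiber p F t : Set Y)) →
        (∀ t ∈ T, ∀ t' ∈ T, ∃ t'' ∈ T,
          famFiber p F t'' ⊆ famFiber p F t ∩ famFiber p F t') →
        (⋂ t ∈ T, famFiber p F t).Nonempty) :=
  k_cb_and_cb_k_general p n Y hYdef
end

section
/- Let G be a group, let X and Y be subgroups of G, and let S ⊆ G. Suppose a, b ∈ S ⋄ (X \ Y), i.e., a, b ∈ S and a(X \ Y) ∩ S = ∅ and b(X \ Y) ∩ S = ∅. If aX = bX, then aY = bY. -/
open Pointwise

theorem gap_crossing {G : Type*} [Group G] (X Y : Subgroup G) (S : Set G) (a b : G)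
    (ha : a ∈ S) (hb : b ∈ S)
    (haS : a • ((X : Set G) \ (Y : Set G)) ∩ S = ∅)
    (hbS : b • ((X : Set G) \ (Y : Set G)) ∩ S = ∅)
    (hX : a • (X : Set G) = b • (X : Set G)) :
    a • (Y : Set G) = b • (Y : Set G) := by
  rw [leftCoset_eq_iff] at hX ⊢
  by_contra hY
  have : b ∈ a • ((X : Set G) \ (Y : Set G)) ∩ S := by
    refine ⟨⟨a⁻¹ * b, ⟨hX, hY⟩, by simp [smul_eq_mul]⟩, hb⟩
  rw [haS] at this
  exact this
end

section
/- Let G be a group, F a finite subgroup of G, and let Y_n ⊆ Y_{n−1} ⊆ ⋯ ⊆ Y_0 ⊆ X_0 ⊆ X_1 ⊆ ⋯ ⊆ X_n be subgroups of G such that Y_i^F ⊆ Y_i for all 0 ≤ i ≤ n and Y_i^{X_i} ⊆ Y_{i−1} for all 1 ≤ i ≤ n. Let I ⊆ G and for 1 ≤ i ≤ n set D_i = X_i ∩ (I ⋄ (X_{i−1} \ F·Y_{i−1})). Suppose a_i, a′_i ∈ D_i for i = 1, …, n and Y_n·(a_n a_{n−1} ⋯ a_1) = Y_n·(a′_n a′_{n−1}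 ⋯ a′_1). Then a_n·(F·Y_{n−1}) = a′_n·(F·Y_{n−1}). If moreover a_n·Y_{n−1} = a′_n·Y_{n−1}, then Y_{n−1}·(a_{n−1} ⋯ a_1) = Y_{n−1}·(a′_{n−1} ⋯ a′_1). -/
open Pointwise

/-- `X ⋄ Y = {g ∈ X : gY ∩ X = ∅}`. -/
def diamond {G : Type*} [Group G] (X Y : Set G) : Set G :=
  {g ∈ X | g • Y ∩ X = ∅}

/-- The descending product `a_k * a_{k-1} * ⋯ * a_1` (empty product for `k = 0`). -/
def prodDesc {G : Type*} [Group G] (a : ℕ → G) : ℕ → G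
  | 0 => 1
  | k + 1 => a (k + 1) * prodDesc a k

theorem claim1 {G : Type*} [Group G] (n : ℕ) (hn : 1 ≤ n)
    (F : Subgroup G) (hF : (F : Set G).Finite)
    (X Y : ℕ → Subgroup G)
    (hYdec : ∀ i, i < n → Y (i + 1) ≤ Y i)
    (hXinc : ∀ i, i < n → X i ≤ X (i + 1))
    (hYX : Y 0 ≤ X 0)
    (hYF : ∀ i, i ≤ n → ∀ y ∈ Y i, ∀ f ∈ F, f⁻¹ * y * f ∈ Y i)
    (hconj : ∀ i, 1 ≤ i → i ≤ n → ∀ y ∈ Y i, ∀ x ∈ X i, x⁻¹ * y * x ∈ Y (i - 1))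
    (I : Set G) (a a' : ℕ → G)
    (ha : ∀ i, 1 ≤ i → i ≤ n →
      a i ∈ (X i : Set G) ∩
        diamond I ((X (i - 1) : Set G) \ ((F : Set G) * (Y (i - 1) : Set G))))
    (ha' : ∀ i, 1 ≤ i → i ≤ n →
      a' i ∈ (X i : Set G) ∩
        diamond I ((X (i - 1) : Set G) \ ((F : Set G) * (Y (i - 1) : Set G))))
    (heq : (Y n : Set G) * {prodDesc a n} = (Y n : Set G) * {prodDesc a' n}) :
    a n • ((F : Set G) * (Y (n - 1) : Set G)) =
      a' n • ((F : Set G) * (Y (n - 1) : Set G)) ∧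
    (a n • (Y (n - 1) : Set G) = a' n • (Y (n - 1) : Set G) →
      (Y (n - 1) : Set G) * {prodDesc a (n - 1)} =
        (Y (n - 1) : Set G) * {prodDesc a' (n - 1)}) := by
  obtain ⟨m, rfl⟩ : ∃ m, n = m + 1 := ⟨n - 1, (Nat.succ_pred_eq_of_pos hn).symm⟩
  simp only [Nat.add_sub_cancel] at *
  -- monotonicity
  have hXmono : ∀ i j, i ≤ j → j ≤ m + 1 → X i ≤ X j := by
    intro i j hij
    induction j, hij using Nat.le_induction with
    | base => exact fun _ => le_rfl
    | succ j hj ih => exact fun hjn => (ih (by omega)).trans (hXinc j (by omega))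
  have hYmono : ∀ i j, i ≤ j → j ≤ m + 1 → Y j ≤ Y i := by
    intro i j hij
    induction j, hij using Nat.le_induction with
    | base => exact fun _ => le_rfl
    | succ j hj ih => exact fun hjn => (hYdec j (by omega)).trans (ih (by omega))
  have hYXm : Y m ≤ X m :=
    ((hYmono 0 m (Nat.zero_le m) (by omega)).trans hYX).trans
      (hXmono 0 m (Nat.zero_le m) (by omega))
  -- products lie in X m
  have hprod : ∀ (b : ℕ → G), (∀ i, 1 ≤ i → i ≤ m + 1 → b i ∈ X i) →
      ∀ k, k ≤ m → prodDesc b k ∈ X m := by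
    intro b hb k
    induction k with
    | zero => exact fun _ => one_mem _
    | succ k ih =>
      intro hk
      show b (k + 1) * prodDesc b k ∈ X m
      exact mul_mem (hXmono (k + 1) m hk (by omega) (hb (k + 1) (by omega) (by omega)))
        (ih (by omega))
  set A := a (m + 1) with hAdef
  set A' := a' (m + 1) with hA'def
  set P := prodDesc a m with hPdef
  set P' := prodDesc a' m with hP'def
  have haN := ha (m + 1) (by omega) le_rfl
  have ha'N := ha' (m + 1) (by omega) le_rfl
  have hAX : A ∈ X (m + 1) := haN.1
  have hA'X : A' ∈ X (m + 1) := ha'N.1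
  have hAI : A ∈ I := haN.2.1
  have hA'empty : A' • (((X m : Set G)) \ ((F : Set G) * (Y m : Set G))) ∩ I = ∅ :=
    ha'N.2.2
  have hPX : P ∈ X m := hprod a (fun i h1 h2 => (ha i h1 h2).1) m le_rfl
  have hP'X : P' ∈ X m := hprod a' (fun i h1 h2 => (ha' i h1 h2).1) m le_rfl
  -- extract y from the coset equality
  have hgmem : prodDesc a (m + 1) ∈ (Y (m + 1) : Set G) * {prodDesc a' (m + 1)} := by
    rw [← heq]
    exact ⟨1, one_mem _, prodDesc a (m + 1), rfl, one_mul _⟩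
  obtain ⟨y, hyY, w, hw, hyeq⟩ := hgmem
  rw [Set.mem_singleton_iff] at hw
  subst hw
  have hy : A * P = y * (A' * P') := hyeq.symm
  -- z = A⁻¹ y⁻¹ A ∈ Y m
  set z := A⁻¹ * y⁻¹ * A with hzdef
  have hzY : z ∈ Y m := by
    have := hconj (m + 1) (by omega) le_rfl y⁻¹ (inv_mem hyY) A hAX
    simpa using this
  set u := A'⁻¹ * A with hudef
  have hA : A = y * (A' * P') * P⁻¹ := by rw [← hy]; group
  have hu : u = P' * P⁻¹ * z⁻¹ := by rw [hudef, hzdef, hA]; group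
  have huX : u ∈ X m := by
    rw [hu]
    exact mul_mem (mul_mem hP'X (inv_mem hPX)) (inv_mem (hYXm hzY))
  -- u ∈ F * Y m
  have huFY : u ∈ (F : Set G) * (Y m : Set G) := by
    by_contra hnot
    have hmem : A ∈ A' • (((X m : Set G)) \ ((F : Set G) * (Y m : Set G))) ∩ I := by
      refine ⟨⟨u, ⟨huX, hnot⟩, ?_⟩, hAI⟩
      show A' * u = A
      rw [hudef]; group
    rw [hA'empty] at hmem
    exact hmem
  -- F * Y m is a subgroup
  have hm : m ≤ m + 1 := by omega
  let FY : Subgroup G :=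
    { carrier := (F : Set G) * (Y m : Set G)
      one_mem' := ⟨1, one_mem F, 1, one_mem _, mul_one 1⟩
      mul_mem' := by
        rintro x₁ x₂ ⟨f1, hf1, y1, hy1, rfl⟩ ⟨f2, hf2, y2, hy2, rfl⟩
        exact ⟨f1 * f2, mul_mem hf1 hf2, (f2⁻¹ * y1 * f2) * y2,
          mul_mem (hYF m hm y1 hy1 f2 hf2) hy2, by group⟩
      inv_mem' := by
        rintro x ⟨f, hf, yy, hyy, rfl⟩
        refine ⟨f⁻¹, inv_mem hf, f * yy⁻¹ * f⁻¹, ?_, by group⟩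
        have := hYF m hm yy⁻¹ (inv_mem hyy) f⁻¹ (inv_mem hf)
        simpa using this }
  have hFYcarrier : (FY : Set G) = (F : Set G) * (Y m : Set G) := rfl
  have hsmulFY : ∀ (H : Subgroup G) (g : G), g ∈ H → g • (H : Set G) = H := by
    intro H g hg
    ext x
    rw [Set.mem_smul_set_iff_inv_smul_mem, smul_eq_mul, SetLike.mem_coe, SetLike.mem_coe]
    exact mul_mem_cancel_left (inv_mem hg)
  have hAA' : A = A' * u := by rw [hudef]; group
  constructor
  · -- part 1
    rw [hAA', ← hFYcarrier, mul_smul, hsmulFY FY u huFY]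
  · -- part 2
    intro hsame
    have hAmem : A ∈ A' • (Y m : Set G) := by
      rw [← hsame]
      exact ⟨1, one_mem _, mul_one A⟩
    obtain ⟨y₀, hy₀, hy₀eq'⟩ := hAmem
    have hy₀eq : A' * y₀ = A := hy₀eq'
    have huY : u ∈ Y m := by
      have : u = y₀ := by rw [hudef, ← hy₀eq]; group
      rwa [this]
    have hPP' : P' * P⁻¹ ∈ Y m := by
      have hEq : P' * P⁻¹ = u * z := by rw [hu]; group
      rw [hEq]; exact mul_mem huY hzY
    ext x
    constructor
    · rintro ⟨v, hv, w, hw, rfl⟩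
      rw [Set.mem_singleton_iff] at hw; subst hw
      have hPP'2 : P * P'⁻¹ ∈ Y m := by
        have := inv_mem hPP'
        simpa [mul_inv_rev] using this
      exact ⟨v * (P * P'⁻¹), mul_mem hv hPP'2, P', rfl, by group⟩
    · rintro ⟨v, hv, w, hw, rfl⟩
      rw [Set.mem_singleton_iff] at hw; subst hw
      exact ⟨v * (P' * P⁻¹), mul_mem hv hPP', P, rfl, by group⟩
end

section
/- Let G be a group, F a finite subgroup of G, and let Y_n ⊆ Y_{n−1} ⊆ ⋯ ⊆ Y_0 ⊆ X_0 ⊆ X_1 ⊆ ⋯ ⊆ X_n be subgroups of G such that Y_i^F ⊆ Y_i for all 0 ≤ i ≤ n and Y_i^{X_i} ⊆ Y_{i−1} for all 1 ≤ i ≤ n. Let I ⊆ G and for 1 ≤ i ≤ n set D_i = X_i ∩ (I ⋄ (X_{i−1} \ F·Y_{i−1})). Let a_i ∈ D_i for i = 1, …, n and let c = a_n a_{n−1} ⋯ a_1. Fix 1 ≤ i ≤ n. Then for any a′_1, …, a′_n with a′_j ∈ D_j for all j, a′_n a′_{n−1} ⋯ a′_1 = c, and a′_j·Y_{j−1} =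 a_j·Y_{j−1} for all j > i, one has a′_i·(F·Y_{i−1}) = a_i·(F·Y_{i−1}). -/
/-!
Write `P_m = a_m ⋯ a_1` and `P'_m = a'_m ⋯ a'_1`. Descending from `P_n = P'_n`, the elements
`P_m P'_m⁻¹` stay in `Y_m` for `m ≥ i`: the step `P_{m-1} P'_{m-1}⁻¹ = a_m⁻¹ (P_m P'_m⁻¹) a'_m`
only uses `a_m⁻¹ Y_m a_m ⊆ Y_{m-1}` and `a'_m ∈ a_m Y_{m-1}`. One more step shows
`a_i⁻¹ a'_i ∈ X_{i-1}`; since `a'_i ∈ I` and `a_i (X_{i-1} \ F Y_{i-1})` misses `I`, in fact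
`a_i⁻¹ a'_i ∈ F Y_{i-1}`, which is a subgroup because `F` normalizes `Y_{i-1}`.
-/

open Pointwise

lemma monotoneOn_Iic_of_le_succ {α : Type*} [Preorder α] {f : ℕ → α} {n : ℕ}
    (hf : ∀ m, m < n → f m ≤ f (m + 1)) : MonotoneOn f (Set.Iic n) :=
  monotoneOn_of_le_succ Set.ordConnected_Iic fun m _ _ hm => by
    rw [Order.succ_eq_add_one, Set.mem_Iic] at hm
    rw [Order.succ_eq_add_one]
    exact hf m hm

lemma antitoneOn_Iic_of_succ_le {α : Type*} [Preorder α] {f : ℕ → α} {n : ℕ}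
    (hf : ∀ m, m < n → f (m + 1) ≤ f m) : AntitoneOn f (Set.Iic n) :=
  monotoneOn_Iic_of_le_succ (α := αᵒᵈ) hf

section

variable {G : Type*} [Group G]

lemma prodDesc_mem {H : Subgroup G} {b : ℕ → G} {m : ℕ}
    (hb : ∀ j, 1 ≤ j → j ≤ m → b j ∈ H) : prodDesc b m ∈ H := by
  induction m with
  | zero => exact H.one_mem
  | succ k ih =>
    exact H.mul_mem (hb (k + 1) (by omega) le_rfl) (ih fun j h1 h2 => hb j h1 (by omega))

lemma prodDesc_mem_of_monotoneOn {X : ℕ → Subgroup G} {b : ℕ → G} {k n : ℕ}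
    (hX : MonotoneOn X (Set.Iic n)) (hb : ∀ j, 1 ≤ j → j ≤ n → b j ∈ X j) (hk : k ≤ n) :
    prodDesc b k ∈ X k :=
  prodDesc_mem fun j h1 h2 =>
    hX (Set.mem_Iic.2 (by omega)) (Set.mem_Iic.2 hk) h2 (hb j h1 (by omega))

lemma prodDesc_mul_inv_mem_of_prodDesc_eq {a a' : ℕ → G} {Y : ℕ → Subgroup G} {i n : ℕ}
    (hin : i ≤ n) (heq : prodDesc a n = prodDesc a' n)
    (hconj : ∀ m, i < m → m ≤ n → ∀ y ∈ Y m, (a m)⁻¹ * y * a m ∈ Y (m - 1))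
    (hcoset : ∀ m, i < m → m ≤ n → (a m)⁻¹ * a' m ∈ Y (m - 1)) :
    prodDesc a i * (prodDesc a' i)⁻¹ ∈ Y i := by
  refine Nat.decreasingInduction' (P := fun k => prodDesc a k * (prodDesc a' k)⁻¹ ∈ Y k)
    (fun k hkn hik hw => ?_) hin (by simp [heq])
  have key : prodDesc a k * (prodDesc a' k)⁻¹ =
      (a (k + 1))⁻¹ * (prodDesc a (k + 1) * (prodDesc a' (k + 1))⁻¹) * a (k + 1) *
        ((a (k + 1))⁻¹ * a' (k + 1)) := by
    simp only [prodDesc]; group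
  rw [key]
  exact (Y k).mul_mem (hconj (k + 1) (by omega) hkn _ hw) (hcoset (k + 1) (by omega) hkn)

lemma inv_mul_mem_of_prodDesc_mul_inv_mem {a a' : ℕ → G} {H K : Subgroup G} {k : ℕ}
    (hw : prodDesc a (k + 1) * (prodDesc a' (k + 1))⁻¹ ∈ K)
    (hK : ∀ y ∈ K, (a (k + 1))⁻¹ * y * a (k + 1) ∈ H)
    (hP : prodDesc a k ∈ H) (hP' : prodDesc a' k ∈ H) : (a (k + 1))⁻¹ * a' (k + 1) ∈ H := by
  have key : (a (k + 1))⁻¹ * a' (k + 1) =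
      (a (k + 1))⁻¹ * (prodDesc a (k + 1) * (prodDesc a' (k + 1))⁻¹)⁻¹ * a (k + 1) *
        (prodDesc a k * (prodDesc a' k)⁻¹) := by
    simp only [prodDesc]; group
  rw [key]
  exact H.mul_mem (hK _ (K.inv_mem hw)) (H.mul_mem hP (H.inv_mem hP'))

lemma inv_mul_mem_of_mem_diamond {I A B : Set G} {g h : G} (hg : g ∈ diamond I (A \ B))
    (hh : h ∈ I) (hA : g⁻¹ * h ∈ A) : g⁻¹ * h ∈ B := by
  by_contra hB
  have hmem : h ∈ g • (A \ B) ∩ I := ⟨⟨g⁻¹ * h, ⟨hA, hB⟩, by simp⟩, hh⟩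
  rw [hg.2] at hmem
  exact hmem

lemma Subgroup.le_normalizer_of_inv_mul_mul_mem {F Y : Subgroup G}
    (hFY : ∀ y ∈ Y, ∀ f ∈ F, f⁻¹ * y * f ∈ Y) : F ≤ Subgroup.normalizer Y :=
  Subgroup.le_normalizer_iff.mpr fun f hf y hy => by
    simpa using hFY y hy f⁻¹ (F.inv_mem hf)

lemma smul_mul_eq_of_inv_mul_mem {F Y : Subgroup G} (hFY : ∀ y ∈ Y, ∀ f ∈ F, f⁻¹ * y * f ∈ Y)
    {g g' : G} (h : g⁻¹ * g' ∈ (F : Set G) * Y) :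
    g' • ((F : Set G) * Y) = g • ((F : Set G) * Y) := by
  rw [← Subgroup.coe_mul_of_left_le_normalizer_right F Y
    (Subgroup.le_normalizer_of_inv_mul_mul_mem hFY)] at h ⊢
  rw [leftCoset_eq_iff]
  simpa using (F ⊔ Y).inv_mem h

end

theorem claim2_general {G : Type*} [Group G] (n : ℕ)
    (F : Subgroup G)
    (X Y : ℕ → Subgroup G)
    (hYdec : ∀ i, i < n → Y (i + 1) ≤ Y i)
    (hXinc : ∀ i, i < n → X i ≤ X (i + 1))
    (hYX : Y 0 ≤ X 0)
    (hYF : ∀ i, i ≤ n → ∀ y ∈ Y i, ∀ f ∈ F, f⁻¹ * y * f ∈ Y i)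
    (hconj : ∀ i, 1 ≤ i → i ≤ n → ∀ y ∈ Y i, ∀ x ∈ X i, x⁻¹ * y * x ∈ Y (i - 1))
    (I : Set G) (a : ℕ → G)
    (ha : ∀ j, 1 ≤ j → j ≤ n →
      a j ∈ (X j : Set G) ∩
        diamond I ((X (j - 1) : Set G) \ ((F : Set G) * (Y (j - 1) : Set G))))
    (c : G) (hc : c = prodDesc a n)
    (i : ℕ) (hi1 : 1 ≤ i) (hin : i ≤ n) :
    ∀ a' : ℕ → G,
      (∀ j, 1 ≤ j → j ≤ n →
        a' j ∈ (X j : Set G) ∩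
          diamond I ((X (j - 1) : Set G) \ ((F : Set G) * (Y (j - 1) : Set G)))) →
      prodDesc a' n = c →
      (∀ j, i < j → j ≤ n → a' j • (Y (j - 1) : Set G) = a j • (Y (j - 1) : Set G)) →
      a' i • ((F : Set G) * (Y (i - 1) : Set G)) =
        a i • ((F : Set G) * (Y (i - 1) : Set G)) := by
  intro a' ha' hc' hcoset
  obtain ⟨k, rfl⟩ := Nat.exists_eq_add_of_le' hi1
  simp only [Nat.add_sub_cancel] at ha ha' ⊢
  have hXmono : MonotoneOn X (Set.Iic n) := monotoneOn_Iic_of_le_succ hXinc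
  have hYanti : AntitoneOn Y (Set.Iic n) := antitoneOn_Iic_of_succ_le hYdec
  have hk : k ≤ n := by omega
  have hYXk : Y k ≤ X k :=
    (hYanti (Set.mem_Iic.2 n.zero_le) (Set.mem_Iic.2 hk) k.zero_le).trans
      (hYX.trans (hXmono (Set.mem_Iic.2 n.zero_le) (Set.mem_Iic.2 hk) k.zero_le))
  have hw : prodDesc a (k + 1) * (prodDesc a' (k + 1))⁻¹ ∈ Y (k + 1) :=
    prodDesc_mul_inv_mem_of_prodDesc_eq hin (hc ▸ hc'.symm)
      (fun m _ hm y hy => hconj m (by omega) hm y hy (a m) (ha m (by omega) hm).1)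
      (fun m hm hmn => (leftCoset_eq_iff _).mp (hcoset m hm hmn).symm)
  have hX : (a (k + 1))⁻¹ * a' (k + 1) ∈ X k :=
    inv_mul_mem_of_prodDesc_mul_inv_mem hw
      (fun y hy => hYXk (hconj (k + 1) hi1 hin y hy _ (ha (k + 1) hi1 hin).1))
      (prodDesc_mem_of_monotoneOn hXmono (fun j h1 h2 => (ha j h1 h2).1) hk)
      (prodDesc_mem_of_monotoneOn hXmono (fun j h1 h2 => (ha' j h1 h2).1) hk)
  exact smul_mul_eq_of_inv_mul_mem (hYF k hk)
    (inv_mul_mem_of_mem_diamond (ha (k + 1) hi1 hin).2 (ha' (k + 1) hi1 hin).2.1 hX)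

theorem claim2 {G : Type*} [Group G] (n : ℕ) (hn : 1 ≤ n)
    (F : Subgroup G) (hF : (F : Set G).Finite)
    (X Y : ℕ → Subgroup G)
    (hYdec : ∀ i, i < n → Y (i + 1) ≤ Y i)
    (hXinc : ∀ i, i < n → X i ≤ X (i + 1))
    (hYX : Y 0 ≤ X 0)
    (hYF : ∀ i, i ≤ n → ∀ y ∈ Y i, ∀ f ∈ F, f⁻¹ * y * f ∈ Y i)
    (hconj : ∀ i, 1 ≤ i → i ≤ n → ∀ y ∈ Y i, ∀ x ∈ X i, x⁻¹ * y * x ∈ Y (i - 1))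
    (I : Set G) (a : ℕ → G)
    (ha : ∀ j, 1 ≤ j → j ≤ n →
      a j ∈ (X j : Set G) ∩
        diamond I ((X (j - 1) : Set G) \ ((F : Set G) * (Y (j - 1) : Set G))))
    (c : G) (hc : c = prodDesc a n)
    (i : ℕ) (hi1 : 1 ≤ i) (hin : i ≤ n) :
    ∀ a' : ℕ → G,
      (∀ j, 1 ≤ j → j ≤ n →
        a' j ∈ (X j : Set G) ∩
          diamond I ((X (j - 1) : Set G) \ ((F : Set G) * (Y (j - 1) : Set G)))) →
      prodDesc a' n = c →
      (∀ j, i < j → j ≤ n → a' j • (Y (j - 1) : Set G) = a j • (Y (j - 1) : Set G)) →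
      a' i • ((F : Set G) * (Y (i - 1) : Set G)) =
        a i • ((F : Set G) * (Y (i - 1) : Set G)) :=
  claim2_general n F X Y hYdec hXinc hYX hYF hconj I a ha c hc i hi1 hin
end
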